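/- Let F be a finite field with q elements, let n and k be positive integers, let A ∈ M_n(F) be invertible, and let V ∈ F^(n×k). Then the number of matrices U ∈ F^(k×n) such that A + V·U is invertible is at least (1 − q^(−1)) · q^(kn) if k = 1, and at least (1 − (q+1)/q²) · q^(kn) if k ≥ 2. -/

import Mathlib

/-!
Put `B = A⁻¹ V`; then `A + V U = A (1 + B U)`, so `A + V U` is invertible iff `1 + U B` is
(Weinstein–Aronszajn). Factor `B = C G` through `F^r`, `r = rank B`, with `C` left invertible and
`G` right invertible. The maps `U ↦ U C` and `X ↦ G X` are then surjective and additive, so all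
their fibres have the same size, and `1 + (U C) G` is invertible iff `1 + G (U C)` is. Counting
through both maps gives exactly `q^(kn) |GL_r(F)| / q^(r²) = q^(kn) ∏_{j=1}^r (1 - q^(-j))`
matrices `U`. Since `r ≤ k`, for `k = 1` this product is `1` or `1 - q⁻¹`; for every `r ≥ 1` it is
at least `1 - x - x² + x^(r+1)` with `x = q⁻¹`, by induction on `r`.
-/

open Matrix Finset

theorem AddMonoidHom.card_subtype_comp_mul_card {M N : Type*} [AddGroup M] [AddGroup N]
    (f : M →+ N) (hf : Function.Surjective f) (P : N → Prop) :
    Nat.card {x // P (f x)} * Nat.card N = Nat.card M * Nat.card {y // P y} := by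
  have hfg : ∀ y, f (Function.surjInv hf y) = y := Function.surjInv_eq hf
  have hker : ∀ z : f.ker, f z = 0 := fun z => z.2
  let e (Q : N → Prop) : {x // Q (f x)} ≃ f.ker × {y // Q y} :=
    { toFun x := (⟨x - Function.surjInv hf (f x), by simp [hfg]⟩, ⟨f x, x.2⟩)
      invFun p := ⟨p.1 + Function.surjInv hf p.2, by simpa [hfg, hker] using p.2.2⟩
      left_inv x := by simp
      right_inv p := by ext <;> simp [hfg, hker] }
  have hP := Nat.card_congr (e P)
  have hM := Nat.card_congr ((Equiv.subtypeUnivEquiv fun _ => trivial).symm.trans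
    ((e fun _ => True).trans ((Equiv.refl _).prodCongr (Equiv.subtypeUnivEquiv fun _ => trivial))))
  rw [Nat.card_prod] at hP hM
  rw [hP, hM]
  ring

theorem Nat.card_matrix {m n F : Type*} [Fintype m] [Fintype n] [Fintype F] :
    Nat.card (Matrix m n F) = Fintype.card F ^ (Fintype.card m * Fintype.card n) := by
  simp [Matrix, Nat.card_fun, ← pow_mul, mul_comm]

theorem Matrix.exists_rank_factorization {m n F : Type*} [Fintype m] [DecidableEq m] [Fintype n]
    [DecidableEq n] [Field F] (B : Matrix m n F) :
    ∃ (C : Matrix m (Fin B.rank) F) (G : Matrix (Fin B.rank) n F), C * G = B ∧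
      (∃ P : Matrix (Fin B.rank) m F, P * C = 1) ∧
      ∃ R : Matrix n (Fin B.rank) F, G * R = 1 := by
  let e : LinearMap.range B.mulVecLin ≃ₗ[F] (Fin B.rank → F) :=
    (Module.finBasis F (LinearMap.range B.mulVecLin)).equivFun
  let T : (n → F) →ₗ[F] Fin B.rank → F := e.toLinearMap ∘ₗ B.mulVecLin.rangeRestrict
  let ι : (Fin B.rank → F) →ₗ[F] m → F :=
    (LinearMap.range B.mulVecLin).subtype ∘ₗ e.symm.toLinearMap
  obtain ⟨π, hπ⟩ := ι.exists_leftInverse_of_injective <| LinearMap.ker_eq_bot.2 <|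
    (Submodule.injective_subtype _).comp e.symm.injective
  obtain ⟨σ, hσ⟩ := T.exists_rightInverse_of_surjective <| LinearMap.range_eq_top.2 <|
    e.surjective.comp B.mulVecLin.surjective_rangeRestrict
  have hιT : ι ∘ₗ T = B.mulVecLin := LinearMap.ext fun v => by simp [ι, T]
  refine ⟨ι.toMatrix', T.toMatrix', ?_, ⟨π.toMatrix', ?_⟩, σ.toMatrix', ?_⟩
  · rw [← LinearMap.toMatrix'_comp, hιT, ← Matrix.toLin'_apply', LinearMap.toMatrix'_toLin']
  · rw [← LinearMap.toMatrix'_comp, hπ, LinearMap.toMatrix'_id]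
  · rw [← LinearMap.toMatrix'_comp, hσ, LinearMap.toMatrix'_id]

theorem Matrix.isUnit_one_add_mul_comm {m n R : Type*} [Fintype m] [DecidableEq m] [Fintype n]
    [DecidableEq n] [CommRing R] (X : Matrix m n R) (Y : Matrix n m R) :
    IsUnit (1 + X * Y) ↔ IsUnit (1 + Y * X) := by
  rw [isUnit_iff_isUnit_det, isUnit_iff_isUnit_det, det_one_add_mul_comm]

theorem Matrix.isUnit_add_mul_iff {m n R : Type*} [Fintype m] [DecidableEq m] [Fintype n]
    [DecidableEq n] [CommRing R] {A : Matrix n n R} (hA : IsUnit A) (V : Matrix n m R)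
    (U : Matrix m n R) : IsUnit (A + V * U) ↔ IsUnit (1 + U * (A⁻¹ * V)) := by
  have hAinv : A * A⁻¹ = 1 := A.mul_nonsing_inv ((isUnit_iff_isUnit_det A).1 hA)
  have h : A + V * U = A * (1 + A⁻¹ * V * U) := by
    rw [Matrix.mul_add, Matrix.mul_one, ← Matrix.mul_assoc, ← Matrix.mul_assoc, hAinv,
      Matrix.one_mul]
  rw [h, hA.mul_left_iff, isUnit_one_add_mul_comm]

theorem Matrix.card_isUnit_one_add_mul_mul_card {m n F : Type*} [Fintype m] [DecidableEq m]
    [Fintype n] [DecidableEq n] [Field F] [Finite F] (B : Matrix n m F) :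
    Nat.card {U : Matrix m n F // IsUnit (1 + U * B)} *
        Nat.card (Matrix (Fin B.rank) (Fin B.rank) F) =
      Nat.card (Matrix m n F) * Nat.card (GL (Fin B.rank) F) := by
  obtain ⟨C, G, hCG, ⟨P, hP⟩, R, hR⟩ := B.exists_rank_factorization
  have hC := (AddMonoidHom.mk' (fun U : Matrix m n F => U * C) fun _ _ => Matrix.add_mul _ _ _)
    |>.card_subtype_comp_mul_card (fun X => ⟨X * P, by simp [Matrix.mul_assoc, hP]⟩)
      (fun X => IsUnit (1 + X * G))
  have hG := (AddMonoidHom.mk' (fun X : Matrix m (Fin B.rank) F => G * X)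
    fun _ _ => Matrix.mul_add _ _ _)
    |>.card_subtype_comp_mul_card (fun Y => ⟨R * Y, by simp [← Matrix.mul_assoc, hR]⟩)
      (fun Y => IsUnit (1 + Y))
  have hGL : Nat.card {Y : Matrix (Fin B.rank) (Fin B.rank) F // IsUnit (1 + Y)} =
      Nat.card (GL (Fin B.rank) F) :=
    (Nat.card_congr (Equiv.subtypeEquiv (Equiv.addLeft 1) fun _ => Iff.rfl)).trans
      (Nat.card_range_of_injective Units.val_injective)
  simp only [AddMonoidHom.mk'_apply] at hC hG
  simp only [isUnit_one_add_mul_comm G, hGL] at hG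
  have hB (U : Matrix m n F) : U * B = U * C * G := by rw [Matrix.mul_assoc, hCG]
  simp only [hB]
  apply Nat.eq_of_mul_eq_mul_right (Nat.card_pos : 0 < Nat.card (Matrix m (Fin B.rank) F))
  rw [mul_right_comm, hC, mul_assoc, hG]
  ring

theorem one_sub_sub_sq_add_pow_le_prod_one_sub_pow {R : Type*} [CommRing R] [LinearOrder R]
    [IsStrictOrderedRing R] {x : R} (h0 : 0 ≤ x) (h1 : x ≤ 1) {r : ℕ} (hr : 1 ≤ r) :
    1 - x - x ^ 2 + x ^ (r + 1) ≤ ∏ j ∈ range r, (1 - x ^ (j + 1)) := by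
  induction r, hr using Nat.le_induction with
  | base => simp
  | succ r hr ih =>
    have hxr : x ^ (r + 1) ≤ x ^ 2 := pow_le_pow_of_le_one h0 h1 (by omega)
    calc 1 - x - x ^ 2 + x ^ (r + 1 + 1)
        ≤ (1 - x - x ^ 2 + x ^ (r + 1)) * (1 - x ^ (r + 1)) := by
          linear_combination mul_nonneg (pow_nonneg h0 (r + 1)) (sub_nonneg.2 hxr)
      _ ≤ ∏ j ∈ range (r + 1), (1 - x ^ (j + 1)) := by
          rw [prod_range_succ]
          exact mul_le_mul_of_nonneg_right ih (sub_nonneg.2 (pow_le_one₀ h0 h1))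

theorem one_sub_sub_sq_le_prod_one_sub_pow {R : Type*} [CommRing R] [LinearOrder R]
    [IsStrictOrderedRing R] {x : R} (h0 : 0 ≤ x) (h1 : x ≤ 1) (r : ℕ) :
    1 - x - x ^ 2 ≤ ∏ j ∈ range r, (1 - x ^ (j + 1)) := by
  rcases Nat.eq_zero_or_pos r with rfl | hr
  · simp only [prod_range_zero]
    nlinarith
  · linarith [one_sub_sub_sq_add_pow_le_prod_one_sub_pow h0 h1 hr, pow_nonneg h0 (r + 1)]

theorem Matrix.card_GL_field_eq_pow_mul_prod {F : Type*} [Field F] [Fintype F] (r : ℕ) :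
    (Nat.card (GL (Fin r) F) : ℚ) =
      (Fintype.card F : ℚ) ^ (r * r) *
        ∏ j ∈ range r, (1 - (Fintype.card F : ℚ)⁻¹ ^ (j + 1)) := by
  set q := Fintype.card F
  have hq : 0 < q := Fintype.card_pos
  have hq0 : (q : ℚ) ≠ 0 := by positivity
  have hpow : (q : ℚ) ^ (r * r) = ∏ _j ∈ range r, (q : ℚ) ^ r := by
    rw [prod_const, card_range, pow_mul]
  rw [card_GL_field, Nat.cast_prod,
    Fin.prod_univ_eq_prod_range (fun i => ((q ^ r - q ^ i : ℕ) : ℚ)), ← prod_range_reflect,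
    hpow, ← prod_mul_distrib]
  refine prod_congr rfl fun j hj => ?_
  obtain ⟨i, rfl⟩ : ∃ i, r = i + (j + 1) := ⟨r - (j + 1), by simp at hj; omega⟩
  rw [show i + (j + 1) - 1 - j = i by omega, Nat.cast_sub (Nat.pow_le_pow_right hq (by omega))]
  push_cast
  rw [mul_sub, mul_one, pow_add, mul_assoc, ← mul_pow, mul_inv_cancel₀ hq0, one_pow, mul_one]

theorem Matrix.card_isUnit_one_add_mul {m n F : Type*} [Fintype m] [DecidableEq m]
    [Fintype n] [DecidableEq n] [Field F] [Fintype F] (B : Matrix n m F) :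
    (Nat.card {U : Matrix m n F // IsUnit (1 + U * B)} : ℚ) =
      (Fintype.card F : ℚ) ^ (Fintype.card m * Fintype.card n) *
        ∏ j ∈ range B.rank, (1 - (Fintype.card F : ℚ)⁻¹ ^ (j + 1)) := by
  have h := congrArg (Nat.cast : ℕ → ℚ) B.card_isUnit_one_add_mul_mul_card
  push_cast [Nat.card_matrix, card_GL_field_eq_pow_mul_prod, Fintype.card_fin] at h
  have hq : (Fintype.card F : ℚ) ^ (B.rank * B.rank) ≠ 0 := by positivity
  exact mul_right_cancel₀ hq (by linear_combination h)

theorem additive_preconditioner_nonsingular_count_general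
    {F : Type*} [Field F] [Fintype F] (n k : ℕ)
    (q : ℚ) (hq : q = (Fintype.card F : ℚ))
    (A : Matrix (Fin n) (Fin n) F) (hA : IsUnit A)
    (V : Matrix (Fin n) (Fin k) F) :
    (k = 1 → (1 - 1 / q) * q ^ (k * n) ≤
      (Nat.card {U : Matrix (Fin k) (Fin n) F // IsUnit (A + V * U)} : ℚ)) ∧
    (2 ≤ k → (1 - (q + 1) / q ^ 2) * q ^ (k * n) ≤
      (Nat.card {U : Matrix (Fin k) (Fin n) F // IsUnit (A + V * U)} : ℚ)) := by
  have hq1 : 1 ≤ q := by rw [hq]; exact_mod_cast Fintype.card_pos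
  have hx0 : 0 ≤ q⁻¹ := by positivity
  have hx1 : q⁻¹ ≤ 1 := inv_le_one_of_one_le₀ hq1
  set r := (A⁻¹ * V).rank
  have hcount : (Nat.card {U : Matrix (Fin k) (Fin n) F // IsUnit (A + V * U)} : ℚ) =
      q ^ (k * n) * ∏ j ∈ range r, (1 - q⁻¹ ^ (j + 1)) := by
    rw [Nat.card_congr (Equiv.subtypeEquivRight (isUnit_add_mul_iff hA V)),
      card_isUnit_one_add_mul, hq, Fintype.card_fin, Fintype.card_fin]
  have hqkn : 0 ≤ q ^ (k * n) := by positivity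
  rw [hcount, mul_comm (q ^ (k * n))]
  refine ⟨fun hk => mul_le_mul_of_nonneg_right ?_ hqkn,
    fun _ => mul_le_mul_of_nonneg_right ?_ hqkn⟩
  · obtain hr | hr : r = 0 ∨ r = 1 := by have := (A⁻¹ * V).rank_le_width; omega
    · simp [hr, hx0]
    · simp [hr]
  · calc 1 - (q + 1) / q ^ 2 = 1 - q⁻¹ - q⁻¹ ^ 2 := by field_simp; ring
      _ ≤ _ := one_sub_sub_sq_le_prod_one_sub_pow hx0 hx1 r

/-- for invertible `A` and fixed `V ∈ F^(n×k)`, the number of matrices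
`U ∈ F^(k×n)` with `A + V·U` invertible is at least `(1 - q⁻¹) q^(kn)` if `k = 1`
and at least `(1 - (q+1)/q²) q^(kn)` if `k ≥ 2`. -/
theorem additive_preconditioner_nonsingular_count
    {F : Type*} [Field F] [Fintype F] (n k : ℕ) (hn : 0 < n) (hk : 0 < k)
    (q : ℚ) (hq : q = (Fintype.card F : ℚ))
    (A : Matrix (Fin n) (Fin n) F) (hA : IsUnit A)
    (V : Matrix (Fin n) (Fin k) F) :
    (k = 1 → (1 - 1 / q) * q ^ (k * n) ≤
      (Nat.card {U : Matrix (Fin k) (Fin n) F // IsUnit (A + V * U)} : ℚ)) ∧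
    (2 ≤ k → (1 - (q + 1) / q ^ 2) * q ^ (k * n) ≤
      (Nat.card {U : Matrix (Fin k) (Fin n) F // IsUnit (A + V * U)} : ℚ)) :=
  additive_preconditioner_nonsingular_count_general n k q hq A hA V
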